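/- Q⁺ is monotonically non-increasing in D: for 0 ≤ D ≤ D' ≤ N − S, the hypergeometric tail probability Q⁺(D) = Σ_{k=T+1}^{S} C(N−D, k)·C(D, S−k) / C(N, S) satisfies Q⁺(D') ≤ Q⁺(D). -/
import Mathlib

open Finset

lemma Qplus_step (N S T D : ℕ) (hT : T < S) (hN : D + 1 + S ≤ N) :
    ∑ k ∈ Finset.Icc (T + 1) S, (N - (D + 1)).choose k * (D + 1).choose (S - k) ≤
    ∑ k ∈ Finset.Icc (T + 1) S, (N - D).choose k * D.choose (S - k) := by
  have hm : N - D = (N - (D + 1)) + 1 := by omega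
  set m := N - (D + 1) with hmdef
  rw [hm]
  -- rewrite RHS terms with Pascal
  have hR : ∀ k ∈ Finset.Icc (T + 1) S,
      (m + 1).choose k * D.choose (S - k)
        = m.choose k * D.choose (S - k) + m.choose (k - 1) * D.choose (S - k) := by
    intro k hk
    simp only [mem_Icc] at hk
    obtain ⟨k, rfl⟩ : ∃ j, k = j + 1 := ⟨k - 1, by omega⟩
    rw [Nat.choose_succ_succ']
    simp only [Nat.add_sub_cancel]
    ring
  have hL : ∀ k ∈ Finset.Icc (T + 1) S,
      m.choose k * (D + 1).choose (S - k)
        = m.choose k * D.choose (S - k)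
          + (if k < S then m.choose k * D.choose (S - k - 1) else 0) := by
    intro k hk
    simp only [mem_Icc] at hk
    by_cases h : k < S
    · have : S - k = (S - k - 1) + 1 := by omega
      rw [this, Nat.choose_succ_succ]
      simp [h, mul_add, add_comm]
    · have : k = S := by omega
      subst this
      simp
  rw [Finset.sum_congr rfl hR, Finset.sum_congr rfl hL, Finset.sum_add_distrib,
    Finset.sum_add_distrib]
  apply Nat.add_le_add_left
  -- reindex RHS
  have hre : ∑ k ∈ Finset.Icc (T + 1) S, m.choose (k - 1) * D.choose (S - k)
      = ∑ k ∈ Finset.Icc T (S - 1), m.choose k * D.choose (S - k - 1) := by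
    apply Finset.sum_nbij' (fun k => k - 1) (fun k => k + 1) <;>
      simp only [mem_Icc] <;> intros <;> first
        | omega
        | (congr 1 <;> congr 1 <;> omega)
  rw [hre]
  have hsub : ∑ k ∈ Finset.Icc (T + 1) S,
      (if k < S then m.choose k * D.choose (S - k - 1) else 0)
      = ∑ k ∈ Finset.Icc (T + 1) (S - 1), m.choose k * D.choose (S - k - 1) := by
    rw [Finset.sum_ite, Finset.sum_const_zero, add_zero]
    apply Finset.sum_congr _ (fun _ _ => rfl)
    ext k
    simp only [mem_filter, mem_Icc]
    omega
  rw [hsub]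
  apply Finset.sum_le_sum_of_subset
  intro k hk
  simp only [mem_Icc] at *
  omega

/-- `Q⁺` is monotonically non-increasing in `D`: for `0 ≤ D ≤ D' ≤ N − S`,
`Q⁺(D') ≤ Q⁺(D)` where `Q⁺(D) = Σ_{k=T+1}^{S} C(N−D, k)·C(D, S−k) / C(N, S)`. -/
theorem Qplus_antitone (N S T D D' : ℕ) (hT : T < S) (hDD' : D ≤ D')
    (hD' : D' ≤ N - S) (hS : S ≤ N - D') :
    (∑ k ∈ Finset.Icc (T + 1) S,
        ((N - D').choose k * D'.choose (S - k) : ℝ)) / (N.choose S : ℝ) ≤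
    (∑ k ∈ Finset.Icc (T + 1) S,
        ((N - D).choose k * D.choose (S - k) : ℝ)) / (N.choose S : ℝ) := by
  have hND : D' + S ≤ N := by omega
  have key : ∀ F, D ≤ F → F + S ≤ N →
      (∑ k ∈ Finset.Icc (T + 1) S, (N - F).choose k * F.choose (S - k)) ≤
      (∑ k ∈ Finset.Icc (T + 1) S, (N - D).choose k * D.choose (S - k)) := by
    intro F hF
    induction F, hF using Nat.le_induction with
    | base => intro _; exact le_rfl
    | succ F hF ih =>
      intro hFN
      exact le_trans (Qplus_step N S T F hT hFN) (ih (by omega))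
  have h := key D' hDD' hND
  have hpos : (0:ℝ) < N.choose S := by
    exact_mod_cast Nat.choose_pos (by omega : S ≤ N)
  rw [div_le_div_iff_of_pos_right hpos]
  exact_mod_cast h
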